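/- Let η : ℝ^{n-1} → ℝ be a C² function, g, σ > 0 constants, and n the upward unit normal n = (-∇η, 1)/√(1+|∇η|²) to the graph of η. If gη = -σ ∇·n pointwise (mean-curvature equation with zero velocity), and η attains a positive maximum or a negative minimum, then a contradiction follows; in particular if η → 0 at infinity and attains its extrema, then η ≡ 0. -/

import Mathlib

/-
At a maximum point x₀ of η the gradient vanishes, so the flux ∇η / √(1 + |∇η|²) has the
same derivative at x₀ as ∇η itself; its divergence is then the Laplacian of η at a maximum,
which is nonpositive by the one-dimensional second derivative test along each coordinate
line. The equation gives g η(x₀) ≤ 0, and symmetrically g η(x₁) ≥ 0 at a minimum point x₁,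
so η ≡ 0.
-/

open MeasureTheory Real Filter

noncomputable section

abbrev Euc (n : ℕ) := EuclideanSpace ℝ (Fin n)

def lapl {n : ℕ} (f : Euc n → ℝ) (x : Euc n) : ℝ :=
  ∑ i, fderiv ℝ (fun y => fderiv ℝ f y (EuclideanSpace.single i 1)) x (EuclideanSpace.single i 1)

def diverg {n : ℕ} (A : Euc n → Euc n) (x : Euc n) : ℝ :=
  ∑ i, fderiv ℝ A x (EuclideanSpace.single i 1) i

def kelvinInv {n : ℕ} (x : Euc n) : Euc n := (‖x‖ ^ 2)⁻¹ • x

def lastIdx (n : ℕ) (hn : 0 < n) : Fin n := ⟨n - 1, Nat.sub_lt hn Nat.one_pos⟩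

def eLast (n : ℕ) (hn : 0 < n) : Euc n := EuclideanSpace.single (lastIdx n hn) 1

def horiz {n : ℕ} (x : Euc n) : Euc (n - 1) :=
  WithLp.toLp 2 fun i => x ⟨i.val, lt_of_lt_of_le i.isLt (Nat.sub_le n 1)⟩

def vert {n : ℕ} (hn : 0 < n) (x : Euc n) : ℝ := x (lastIdx n hn)

def mkPt {n : ℕ} (x' : Euc (n - 1)) (t : ℝ) : Euc n :=
  WithLp.toLp 2 fun j => if h : (j : ℕ) < n - 1 then x' ⟨j, h⟩ else t

open scoped Topology RealInnerProductSpace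

theorem IsLocalMax.deriv_deriv_nonpos {f : ℝ → ℝ} {a : ℝ} (h : IsLocalMax f a)
    (hc : ContinuousAt f a) : deriv (deriv f) a ≤ 0 := by
  by_contra! hpos
  have hright : ∀ᶠ x in 𝓝[>] a, 0 < deriv f x ∧ f x ≤ f a :=
    (deriv_pos_right_of_sign_deriv (nhdsWithin_le_nhds
      (eventually_nhdsWithin_sign_eq_of_deriv_pos hpos h.deriv_eq_zero))).and
      (nhdsWithin_le_nhds h)
  obtain ⟨u, hau, hu⟩ := mem_nhdsGT_iff_exists_Ioo_subset.mp hright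
  obtain ⟨m, ham, hmu⟩ := exists_between (Set.mem_Ioi.mp hau)
  have hcont : ContinuousOn f (Set.Icc a m) := by
    intro x hx
    rcases hx.1.eq_or_lt with rfl | hax
    · exact hc.continuousWithinAt
    · exact (differentiableAt_of_deriv_ne_zero
        (hu ⟨hax, hx.2.trans_lt hmu⟩).1.ne').continuousAt.continuousWithinAt
  have hmono : StrictMonoOn f (Set.Icc a m) :=
    strictMonoOn_of_deriv_pos (convex_Icc a m) hcont fun x hx => by
      rw [interior_Icc] at hx
      exact (hu ⟨hx.1, hx.2.trans hmu⟩).1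
  have := hmono (Set.left_mem_Icc.mpr ham.le) (Set.right_mem_Icc.mpr ham.le) ham
  linarith [(hu ⟨ham, hmu⟩).2]

section Gradient

variable {E : Type*} [NormedAddCommGroup E] [InnerProductSpace ℝ E] [CompleteSpace E]

theorem gradient_neg (f : E → ℝ) : gradient (-f) = -gradient f := by
  funext x
  simp [gradient, fderiv_neg]

theorem ContDiff.differentiable_gradient {f : E → ℝ} (hf : ContDiff ℝ 2 f) :
    Differentiable ℝ (gradient f) :=
  (InnerProductSpace.toDual ℝ E).symm.differentiable.comp
    ((hf.fderiv_right le_rfl).differentiable one_ne_zero)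

theorem IsLocalMax.gradient_eq_zero {f : E → ℝ} {x₀ : E} (h : IsLocalMax f x₀) :
    gradient f x₀ = 0 := by
  simp [gradient, h.fderiv_eq_zero]

theorem IsLocalMax.inner_fderiv_gradient_self_nonpos {f : E → ℝ} {x₀ : E}
    (h : IsLocalMax f x₀) (hf : Differentiable ℝ f)
    (hg : DifferentiableAt ℝ (gradient f) x₀) (v : E) :
    ⟪fderiv ℝ (gradient f) x₀ v, v⟫ ≤ 0 := by
  have hline : ∀ t : ℝ, HasDerivAt (fun s : ℝ => x₀ + s • v) v t := fun t => by
    simpa using ((hasDerivAt_id t).smul_const v).const_add x₀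
  have hφ' :
      deriv (fun t : ℝ => f (x₀ + t • v)) = fun t => ⟪gradient f (x₀ + t • v), v⟫ :=
    funext fun t => ((hf _).hasFDerivAt.comp_hasDerivAt t (hline t)).deriv.trans
      (inner_gradient_left ..).symm
  have hφ'' : HasDerivAt (fun t : ℝ => ⟪gradient f (x₀ + t • v), v⟫)
      ⟪fderiv ℝ (gradient f) x₀ v, v⟫ 0 := by
    simpa using (hg.hasFDerivAt.comp_hasDerivAt_of_eq (0 : ℝ) (hline 0) (by simp)).inner ℝ
      (hasDerivAt_const (0 : ℝ) v)
  have hmax : IsLocalMax (fun t : ℝ => f (x₀ + t • v)) 0 :=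
    IsLocalMax.comp_continuous (g := fun t : ℝ => x₀ + t • v) (by simpa using h) (by fun_prop)
  have := hmax.deriv_deriv_nonpos (hf.continuous.comp (by fun_prop)).continuousAt
  rwa [hφ', hφ''.deriv] at this

end Gradient

theorem fderiv_fun_smul_of_eq_zero {𝕜 E F : Type*} [NontriviallyNormedField 𝕜]
    [NormedAddCommGroup E] [NormedSpace 𝕜 E] [NormedAddCommGroup F] [NormedSpace 𝕜 F]
    {c : E → 𝕜} {G : E → F} {x : E} (hc : DifferentiableAt 𝕜 c x)
    (hG : DifferentiableAt 𝕜 G x) (h0 : G x = 0) :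
    fderiv 𝕜 (fun y => c y • G y) x = c x • fderiv 𝕜 G x := by
  rw [fderiv_fun_smul hc hG, h0]
  simp

theorem diverg_neg {n : ℕ} (A : Euc n → Euc n) (x : Euc n) :
    diverg (-A) x = -diverg A x := by
  simp [diverg, fderiv_neg, ← Finset.sum_neg_distrib]

theorem IsLocalMax.diverg_gradient_nonpos {n : ℕ} {f : Euc n → ℝ} {x₀ : Euc n}
    (h : IsLocalMax f x₀) (hf : Differentiable ℝ f)
    (hg : DifferentiableAt ℝ (gradient f) x₀) :
    diverg (gradient f) x₀ ≤ 0 :=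
  Finset.sum_nonpos fun i _ => by
    simpa [EuclideanSpace.inner_single_right] using
      h.inner_fderiv_gradient_self_nonpos hf hg (EuclideanSpace.single i 1)

/-- The horizontal part of `-n`, so that `-∇·n = diverg (meanCurvatureFlux η)`. -/
def meanCurvatureFlux {n : ℕ} (η : Euc n → ℝ) (y : Euc n) : Euc n :=
  (√(1 + ‖gradient η y‖ ^ 2))⁻¹ • gradient η y

theorem meanCurvatureFlux_neg {n : ℕ} (η : Euc n → ℝ) :
    meanCurvatureFlux (-η) = -meanCurvatureFlux η := by
  funext y
  simp [meanCurvatureFlux, gradient_neg]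

theorem fderiv_meanCurvatureFlux_of_gradient_eq_zero {n : ℕ} {η : Euc n → ℝ} {x₀ : Euc n}
    (hg : DifferentiableAt ℝ (gradient η) x₀) (h0 : gradient η x₀ = 0) :
    fderiv ℝ (meanCurvatureFlux η) x₀ = fderiv ℝ (gradient η) x₀ := by
  have hpos : 0 < 1 + ‖gradient η x₀‖ ^ 2 := by positivity
  have hc : DifferentiableAt ℝ (fun y => (√(1 + ‖gradient η y‖ ^ 2))⁻¹) x₀ :=
    (((hg.norm_sq ℝ).const_add 1).sqrt hpos.ne').inv (Real.sqrt_pos.mpr hpos).ne'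
  unfold meanCurvatureFlux
  rw [fderiv_fun_smul_of_eq_zero hc hg h0, h0]
  simp

theorem IsLocalMax.diverg_meanCurvatureFlux_nonpos {n : ℕ} {η : Euc n → ℝ} {x₀ : Euc n}
    (h : IsLocalMax η x₀) (hη : Differentiable ℝ η)
    (hg : DifferentiableAt ℝ (gradient η) x₀) :
    diverg (meanCurvatureFlux η) x₀ ≤ 0 := by
  rw [diverg, fderiv_meanCurvatureFlux_of_gradient_eq_zero hg h.gradient_eq_zero]
  exact h.diverg_gradient_nonpos hη hg

theorem IsLocalMin.diverg_meanCurvatureFlux_nonneg {n : ℕ} {η : Euc n → ℝ} {x₀ : Euc n}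
    (h : IsLocalMin η x₀) (hη : Differentiable ℝ η)
    (hg : DifferentiableAt ℝ (gradient η) x₀) :
    0 ≤ diverg (meanCurvatureFlux η) x₀ := by
  have hneg : IsLocalMax (-η) x₀ := h.neg
  have := hneg.diverg_meanCurvatureFlux_nonpos hη.neg (by rw [gradient_neg]; exact hg.neg)
  rw [meanCurvatureFlux_neg, diverg_neg] at this
  linarith

theorem zero_velocity_surface_flat_general {n : ℕ} (η : Euc (n - 1) → ℝ) (hη : ContDiff ℝ 2 η)
    (g σ : ℝ) (hg : 0 < g) (hσ : 0 < σ)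
    (heq : ∀ x, g * η x
      = σ * diverg (fun y => (Real.sqrt (1 + ‖gradient η y‖ ^ 2))⁻¹ • gradient η y) x)
    (hmax : ∃ x₀, ∀ x, η x ≤ η x₀) (hmin : ∃ x₁, ∀ x, η x₁ ≤ η x) :
    ∀ x, η x = 0 := by
  obtain ⟨x₀, hx₀⟩ := hmax
  obtain ⟨x₁, hx₁⟩ := hmin
  have hd : Differentiable ℝ η := hη.differentiable two_ne_zero
  have hdg : Differentiable ℝ (gradient η) := hη.differentiable_gradient
  have hmax_nonpos : η x₀ ≤ 0 := by
    have hdiv := ((isMaxOn_univ_iff.mpr hx₀).isLocalMax univ_mem)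
      |>.diverg_meanCurvatureFlux_nonpos hd (hdg x₀)
    exact nonpos_of_mul_nonpos_right
      ((heq x₀).trans_le (mul_nonpos_of_nonneg_of_nonpos hσ.le hdiv)) hg
  have hmin_nonneg : 0 ≤ η x₁ := by
    have hdiv := ((isMinOn_univ_iff.mpr hx₁).isLocalMin univ_mem)
      |>.diverg_meanCurvatureFlux_nonneg hd (hdg x₁)
    exact nonneg_of_mul_nonneg_right ((mul_nonneg hσ.le hdiv).trans_eq (heq x₁).symm) hg
  intro x
  linarith [hx₀ x, hx₁ x]

/-- A free surface with zero velocity satisfying `gη = -σ ∇·n` which decays at infinity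
and attains its extrema must vanish identically. -/
theorem zero_velocity_surface_flat {n : ℕ} (η : Euc (n - 1) → ℝ) (hη : ContDiff ℝ 2 η)
    (g σ : ℝ) (hg : 0 < g) (hσ : 0 < σ)
    (heq : ∀ x, g * η x
      = σ * diverg (fun y => (Real.sqrt (1 + ‖gradient η y‖ ^ 2))⁻¹ • gradient η y) x)
    (hlim : Tendsto η (cocompact (Euc (n - 1))) (nhds 0))
    (hmax : ∃ x₀, ∀ x, η x ≤ η x₀) (hmin : ∃ x₁, ∀ x, η x₁ ≤ η x) :
    ∀ x, η x = 0 :=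
  zero_velocity_surface_flat_general η hη g σ hg hσ heq hmax hmin
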